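/- arXiv:1411.5123 — 7 statements merged into one kernel-verified Lean document; each statement's English description precedes it below -/
import Mathlib

section
/- Let G be a finite simple connected graph with n vertices, m edges, and minimum degree δ, and let S be a side of a minimum cut of G with vol(S) ≤ vol(V∖S). Then either |S| = 1, or vol(S) ≥ δ² and Φ(S) ≤ 1/δ. -/
open scoped Classical
open Finset

noncomputable section

variable {V : Type*} [Fintype V]

/-- The set of edges of `G` with exactly one endpoint in `S`. -/
def bdry (G : SimpleGraph V) (S : Finset V) : Finset (Sym2 V) :=
  G.edgeFinset.filter fun e => ∃ u v, u ∈ S ∧ v ∉ S ∧ e = s(u, v)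

/-- The volume of `S`: the sum of the degrees of the vertices of `S`. -/
def vol (G : SimpleGraph V) (S : Finset V) : ℕ := ∑ v ∈ S, G.degree v

/-- The edge connectivity of `G`: the minimum of `|∂S|` over nonempty proper `S ⊆ V`. -/
def econn (G : SimpleGraph V) : ℕ :=
  sInf {k | ∃ S : Finset V, S.Nonempty ∧ S ≠ Finset.univ ∧ (bdry G S).card = k}

/-- The conductance `Φ(S) = |∂S| / min(vol S, 2m − vol S)`. -/
def conduct (G : SimpleGraph V) (S : Finset V) : ℝ :=
  ((bdry G S).card : ℝ) /
    ((min (vol G S) (2 * G.edgeFinset.card - vol G S) : ℕ) : ℝ)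

/-
Every vertex of `S` has degree at least `δ`, and at most `|S| - 1` of its neighbours lie in `S`,
so `|S| δ ≤ vol S ≤ |S| (|S| - 1) + |∂S|`. A minimum cut has `|∂S| ≤ δ` (compare with the cut
around a vertex of minimum degree), hence `δ ≤ |S|` as soon as `|S| ≥ 2`. Then `vol S ≥ δ²` and,
as `S` is the side of smaller volume, `Φ(S) = |∂S| / vol S ≤ δ / δ² = 1 / δ`.
-/

namespace SimpleGraph

variable (G : SimpleGraph V)

lemma card_bdry_eq_card_interedges (S : Finset V) : #(bdry G S) = #(G.interedges S Sᶜ) := by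
  refine (card_bij (fun p _ => s(p.1, p.2)) ?_ ?_ ?_).symm
  · rintro ⟨u, v⟩ huv
    rw [mk_mem_interedges_iff, mem_compl] at huv
    exact mem_filter.2 ⟨mem_edgeFinset.2 huv.2.2, u, v, huv.1, huv.2.1, rfl⟩
  · rintro ⟨a, b⟩ hab ⟨c, d⟩ hcd h
    rw [mk_mem_interedges_iff, mem_compl] at hab hcd
    rcases Sym2.eq_iff.1 h with ⟨rfl, rfl⟩ | ⟨rfl, rfl⟩
    · rfl
    · exact absurd hab.1 hcd.2.1
  · intro e he
    obtain ⟨hE, u, v, hu, hv, rfl⟩ := mem_filter.1 he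
    exact ⟨(u, v), (G.mk_mem_interedges_iff).2 ⟨hu, mem_compl.2 hv, mem_edgeFinset.1 hE⟩, rfl⟩

lemma card_bdry_eq_sum (S : Finset V) : #(bdry G S) = ∑ v ∈ S, #(G.neighborFinset v \ S) := by
  rw [card_bdry_eq_card_interedges, interedges_def, card_filter, sum_product]
  refine sum_congr rfl fun u _ => ?_
  rw [← card_filter]
  congr 1
  ext v
  simp [and_comm]

lemma card_bdry_singleton (v : V) : #(bdry G {v}) = G.degree v := by
  rw [card_bdry_eq_sum, sum_singleton, sdiff_singleton_eq_erase,
    erase_eq_of_notMem (G.notMem_neighborFinset_self v), card_neighborFinset_eq_degree]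

lemma econn_le_minDegree : econn G ≤ G.minDegree := by
  rcases subsingleton_or_nontrivial V with hV | hV
  · have : {k | ∃ S : Finset V, S.Nonempty ∧ S ≠ univ ∧ #(bdry G S) = k} = ∅ :=
      Set.eq_empty_of_forall_notMem fun _ ⟨S, hS, hSu, _⟩ => hSu hS.eq_univ
    simp [econn, this]
  obtain ⟨v, hv⟩ := G.exists_minimal_degree_vertex
  obtain ⟨w, hw⟩ := exists_ne v
  refine hv ▸ Nat.sInf_le ⟨{v}, singleton_nonempty v, fun h => hw ?_, card_bdry_singleton G v⟩
  exact mem_singleton.1 (eq_univ_iff_forall.1 h w)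

lemma vol_add_vol_compl (S : Finset V) : vol G S + vol G Sᶜ = 2 * #G.edgeFinset := by
  rw [← sum_degrees_eq_twice_card_edges]
  exact sum_add_sum_compl S _

lemma card_mul_minDegree_le_vol (S : Finset V) : #S * G.minDegree ≤ vol G S := by
  simpa [vol] using
    card_nsmul_le_sum S (fun v => G.degree v) G.minDegree fun v _ => G.minDegree_le_degree v

lemma vol_le_card_mul_pred_add_card_bdry (S : Finset V) :
    vol G S ≤ #S * (#S - 1) + #(bdry G S) := by
  have hdeg : vol G S = ∑ v ∈ S, (#(G.neighborFinset v ∩ S) + #(G.neighborFinset v \ S)) :=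
    sum_congr rfl fun v _ => by rw [card_inter_add_card_sdiff, card_neighborFinset_eq_degree]
  have hinside : ∀ v ∈ S, #(G.neighborFinset v ∩ S) ≤ #S - 1 := fun v hv => by
    rw [← card_erase_of_mem hv]
    refine card_le_card fun x hx => ?_
    rw [mem_inter, mem_neighborFinset] at hx
    exact mem_erase.2 ⟨hx.1.ne', hx.2⟩
  rw [hdeg, sum_add_distrib, card_bdry_eq_sum]
  gcongr
  simpa using sum_le_sum hinside

lemma minDegree_le_card_of_card_bdry_le {S : Finset V} (hS : 2 ≤ #S)
    (hbd : #(bdry G S) ≤ G.minDegree) : G.minDegree ≤ #S := by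
  have h := (G.card_mul_minDegree_le_vol S).trans <|
    (G.vol_le_card_mul_pred_add_card_bdry S).trans (Nat.add_le_add_left hbd _)
  obtain ⟨k, hk⟩ : ∃ k, #S = k + 2 := ⟨#S - 2, by omega⟩
  rw [hk, show k + 2 - 1 = k + 1 by omega] at h
  rw [hk]
  nlinarith

lemma conduct_le_one_div {S : Finset V} {d : ℕ} (hvol : vol G S ≤ vol G Sᶜ)
    (hbd : #(bdry G S) ≤ d) (hsq : d ^ 2 ≤ vol G S) : conduct G S ≤ 1 / (d : ℝ) := by
  have hmin : min (vol G S) (2 * #G.edgeFinset - vol G S) = vol G S :=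
    min_eq_left (by have := G.vol_add_vol_compl S; omega)
  rw [conduct, hmin]
  rcases Nat.eq_zero_or_pos d with rfl | hd
  · simp [Nat.le_zero.1 hbd]
  have hvolpos : (0 : ℝ) < vol G S := by exact_mod_cast (by positivity : 0 < d ^ 2).trans_le hsq
  rw [div_le_div_iff₀ hvolpos (by exact_mod_cast hd), one_mul]
  exact_mod_cast (Nat.mul_le_mul_right d hbd).trans (sq d ▸ hsq)

end SimpleGraph

theorem stmt4_general {V : Type*} [Fintype V] (G : SimpleGraph V)
    (δ : ℕ) (hδ : δ = G.minDegree)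
    (S : Finset V) (hS : S.Nonempty)
    (hmin : (bdry G S).card = econn G)
    (hvol : vol G S ≤ vol G Sᶜ) :
    S.card = 1 ∨ (δ ^ 2 ≤ vol G S ∧ conduct G S ≤ 1 / (δ : ℝ)) := by
  subst hδ
  have hbd : #(bdry G S) ≤ G.minDegree := hmin ▸ G.econn_le_minDegree
  rcases eq_or_ne S.card 1 with h1 | h1
  · exact Or.inl h1
  have hS2 : 2 ≤ #S := by have := hS.card_pos; omega
  have hsq : G.minDegree ^ 2 ≤ vol G S :=
    calc G.minDegree ^ 2 = G.minDegree * G.minDegree := sq _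
      _ ≤ #S * G.minDegree := Nat.mul_le_mul_right _ (G.minDegree_le_card_of_card_bdry_le hS2 hbd)
      _ ≤ vol G S := G.card_mul_minDegree_le_vol S
  exact Or.inr ⟨hsq, G.conduct_le_one_div hvol hbd hsq⟩

theorem stmt4 {V : Type*} [Fintype V] (G : SimpleGraph V)
    (hconn : G.Connected) (δ : ℕ) (hδ : δ = G.minDegree)
    (S : Finset V) (hS : S.Nonempty) (hSu : S ≠ Finset.univ)
    (hmin : (bdry G S).card = econn G)
    (hvol : vol G S ≤ vol G Sᶜ) :
    S.card = 1 ∨ (δ ^ 2 ≤ vol G S ∧ conduct G S ≤ 1 / (δ : ℝ)) :=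
  stmt4_general G δ hδ S hS hmin hvol

end
end

section
/- Let G be a finite simple graph and δ ≥ 31 a natural number. Let C ⊆ V and A ⊆ C be such that every vertex v ∈ A has at least 2δ/5 neighbors in C (i.e., 5·|N(v) ∩ C| ≥ 2δ), and suppose that the number of edges of G with one endpoint in A and the other endpoint in C∖A is at most δ. Then |A| ≤ 2 or |A| > δ/3. -/
/-!
Write `a = |A|`. A vertex of `A` has at most `a - 1` neighbours in `A`, so it sends at least
`2δ/5 - (a - 1)` edges to `C \ A`. Summing over `A` and comparing with the cut bound gives
`(2a - 5) δ ≤ 5a(a - 1)`, which for `a ≥ 3` and `δ ≥ 31` forces `δ < 3a`.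
-/

open scoped Classical
open Finset

noncomputable section

variable {V : Type*} [Fintype V]

/-- The set of edges of `G` with one endpoint in `A` and the other endpoint in `B`. -/
def edgesBetween (G : SimpleGraph V) (A B : Finset V) : Finset (Sym2 V) :=
  G.edgeFinset.filter fun e => ∃ u v, u ∈ A ∧ v ∈ B ∧ e = s(u, v)

namespace SimpleGraph

variable (G : SimpleGraph V)

theorem card_neighborFinset_inter_le {A C : Finset V} {v : V} (hv : v ∈ A) :
    #(G.neighborFinset v ∩ C) ≤ #(G.neighborFinset v ∩ (C \ A)) + (#A - 1) := by
  have hA : G.neighborFinset v ∩ C ∩ A ⊆ A.erase v := fun w hw => by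
    simp only [mem_inter, mem_neighborFinset] at hw
    exact mem_erase.2 ⟨hw.1.1.ne', hw.2⟩
  rw [← card_inter_add_card_sdiff (G.neighborFinset v ∩ C) A, inter_sdiff_assoc,
    ← card_erase_of_mem hv, add_comm]
  exact Nat.add_le_add_left (card_le_card hA) _

theorem card_interedges_eq_sum_card_neighborFinset_inter (s t : Finset V) :
    #(G.interedges s t) = ∑ v ∈ s, #(G.neighborFinset v ∩ t) := by
  rw [interedges_def, card_filter, sum_product]
  refine sum_congr rfl fun v _ => ?_
  rw [← card_filter, inter_comm, ← filter_mem_eq_inter]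
  congr 1
  ext w
  simp only [mem_filter, mem_neighborFinset]

-- Disjointness makes unordering injective: `(u, w)` and `(w, u)` are never both in `s ×ˢ t`.
theorem card_interedges_le_card_edgesBetween {s t : Finset V} (hst : Disjoint s t) :
    #(G.interedges s t) ≤ #(edgesBetween G s t) := by
  refine card_le_card_of_injOn (fun e => s(e.1, e.2)) (fun e he => ?_) fun e he f hf hef => ?_
  · rw [mem_coe, mem_interedges_iff] at he
    simp only [coe_filter, edgesBetween, Set.mem_ofPred_eq, mem_edgeFinset, mem_edgeSet]
    exact ⟨he.2.2, e.1, e.2, he.1, he.2.1, rfl⟩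
  · rw [mem_coe, mem_interedges_iff] at he hf
    rcases Sym2.eq_iff.1 hef with ⟨h1, h2⟩ | ⟨h1, _⟩
    · exact Prod.ext h1 h2
    · exact (Finset.disjoint_left.1 hst he.1 (h1 ▸ hf.2.1)).elim

end SimpleGraph

-- `(2a - 5) δ ≤ 5a(a - 1)`: for `a ≤ 10` this contradicts `δ ≥ 31` (tight at `a = 3`),
-- for `a ≥ 11` it contradicts `δ ≥ 3a`.
theorem lt_three_mul_of_mul_le {a δ : ℕ} (hδ : 31 ≤ δ) (ha : 3 ≤ a)
    (h : a * (2 * δ) ≤ 5 * (δ + a * (a - 1))) : δ < 3 * a := by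
  by_contra! hle
  obtain ⟨b, rfl⟩ := Nat.exists_eq_add_of_le (by omega : 1 ≤ a)
  rw [Nat.add_sub_cancel_left] at h
  rcases le_or_gt b 9 with hb | hb <;> nlinarith

theorem stmt6_general {V : Type*} [Fintype V] (G : SimpleGraph V) (δ : ℕ) (hδ : 31 ≤ δ)
    (C A : Finset V)
    (hdeg : ∀ v ∈ A, 2 * δ ≤ 5 * (G.neighborFinset v ∩ C).card)
    (hcut : (edgesBetween G A (C \ A)).card ≤ δ) :
    A.card ≤ 2 ∨ δ < 3 * A.card := by
  refine or_iff_not_imp_left.2 fun hA => lt_three_mul_of_mul_le hδ (by omega) ?_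
  calc #A * (2 * δ) = ∑ _v ∈ A, 2 * δ := by rw [sum_const, smul_eq_mul]
    _ ≤ ∑ v ∈ A, 5 * (#(G.neighborFinset v ∩ (C \ A)) + (#A - 1)) :=
      sum_le_sum fun v hv => (hdeg v hv).trans (by gcongr; exact G.card_neighborFinset_inter_le hv)
    _ = 5 * (#(G.interedges A (C \ A)) + #A * (#A - 1)) := by
      rw [G.card_interedges_eq_sum_card_neighborFinset_inter, ← mul_sum, sum_add_distrib, sum_const,
        smul_eq_mul]
    _ ≤ 5 * (δ + #A * (#A - 1)) := by
      gcongr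
      exact (G.card_interedges_le_card_edgesBetween disjoint_sdiff).trans hcut

theorem stmt6 {V : Type*} [Fintype V] (G : SimpleGraph V) (δ : ℕ) (hδ : 31 ≤ δ)
    (C A : Finset V) (hAC : A ⊆ C)
    (hdeg : ∀ v ∈ A, 2 * δ ≤ 5 * (G.neighborFinset v ∩ C).card)
    (hcut : (edgesBetween G A (C \ A)).card ≤ δ) :
    A.card ≤ 2 ∨ δ < 3 * A.card :=
  stmt6_general G δ hδ C A hdeg hcut
end
end

section
/- Let G be a finite simple graph with no isolated vertices and let 0 < α ≤ 1/3. Consider any run of pushes starting from the state (p₀, r₀) with p₀ = 0 and r₀ = p° an arbitrary function V → ℝ, and let p be the settled mass after the run. Then for every ordered pair (u, v) of adjacent vertices, the net flow over (u, v) during the run equals F(u,v) = ((1−α)/(2α)) · (p(u)/d(u) − p(v)/d(v)). -/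
open scoped Classical
open Finset

noncomputable section

variable {V : Type*} [Fintype V]

/-- The push operation at vertex `u` on a state `(p, r)` of settled and residual mass:
a fraction `α` of the residual mass at `u` settles at `u`, half of the rest is spread
evenly to the neighbors of `u`, and half stays at `u`. -/
def push (G : SimpleGraph V) (α : ℝ) (u : V) (s : (V → ℝ) × (V → ℝ)) :
    (V → ℝ) × (V → ℝ) :=
  (fun w => if w = u then s.1 u + α * s.2 u else s.1 w,
   fun w =>
     if w = u then (1 - α) * s.2 u / 2
     else if G.Adj u w then s.2 w + (1 - α) * s.2 u / (2 * (G.degree u : ℝ))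
     else s.2 w)

/-- The state obtained from `init` by successively pushing at the vertices of the list `us`. -/
def runState (G : SimpleGraph V) (α : ℝ) (init : (V → ℝ) × (V → ℝ)) (us : List V) :
    (V → ℝ) × (V → ℝ) :=
  us.foldl (fun s u => push G α u s) init

/-- The net flow over the ordered pair `(u, v)` during the run of pushes at the vertices of
`us` started at state `s`: the sum over pushes at `u` of the mass sent along `(u,v)` minus
the sum over pushes at `v` of the mass sent along `(v,u)`. -/
def netFlow (G : SimpleGraph V) (α : ℝ) (u v : V) :
    (V → ℝ) × (V → ℝ) → List V → ℝ
  | _, [] => 0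
  | s, w :: ws =>
      ((if w = u then (1 - α) * s.2 u / (2 * (G.degree u : ℝ)) else 0) -
        (if w = v then (1 - α) * s.2 v / (2 * (G.degree v : ℝ)) else 0)) +
      netFlow G α u v (push G α w s) ws

/- A push at `x` settles `α · r(x)` at `x` and sends `(1 - α) · r(x) / (2 d(x))` to each
neighbour, so the flow sent is `(1 - α) / (2α d(x))` times the mass settled; summing over the run,
the settled increments telescope to `p(x) - p₀(x)`. -/

lemma push_fst_sub_fst (G : SimpleGraph V) (α : ℝ) (w x : V) (s : (V → ℝ) × (V → ℝ)) :
    (push G α w s).1 x - s.1 x = if w = x then α * s.2 x else 0 := by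
  by_cases hx : w = x
  · subst hx
    simp [push]
  · simp [push, hx, Ne.symm hx]

lemma flow_sent_eq_mul_settled (G : SimpleGraph V) {α : ℝ} (hα : α ≠ 0) (w x : V)
    (s : (V → ℝ) × (V → ℝ)) :
    (if w = x then (1 - α) * s.2 x / (2 * (G.degree x : ℝ)) else 0) =
      (1 - α) / (2 * α) * (((push G α w s).1 x - s.1 x) / (G.degree x : ℝ)) := by
  rw [push_fst_sub_fst]
  split_ifs
  · field_simp
  · simp

lemma netFlow_eq_settled_increment (G : SimpleGraph V) {α : ℝ} (hα : α ≠ 0) (u v : V)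
    (us : List V) (s : (V → ℝ) × (V → ℝ)) :
    netFlow G α u v s us =
      (1 - α) / (2 * α) *
        (((runState G α s us).1 u - s.1 u) / (G.degree u : ℝ) -
         ((runState G α s us).1 v - s.1 v) / (G.degree v : ℝ)) := by
  induction us generalizing s with
  | nil => simp [netFlow, runState]
  | cons w ws ih =>
    have hrun : runState G α s (w :: ws) = runState G α (push G α w s) ws := rfl
    rw [netFlow, ih, hrun, flow_sent_eq_mul_settled G hα w u s,
      flow_sent_eq_mul_settled G hα w v s]
    ring

theorem stmt8_general {V : Type*} [Fintype V] (G : SimpleGraph V)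
    (α : ℝ) (hα0 : 0 < α)
    (p0 : V → ℝ) (us : List V) (u v : V) :
    netFlow G α u v ((fun _ => 0), p0) us =
      (1 - α) / (2 * α) *
        ((runState G α ((fun _ => 0), p0) us).1 u / (G.degree u : ℝ) -
         (runState G α ((fun _ => 0), p0) us).1 v / (G.degree v : ℝ)) := by
  simpa using netFlow_eq_settled_increment G hα0.ne' u v us ((fun _ => 0), p0)

theorem stmt8 {V : Type*} [Fintype V] (G : SimpleGraph V)
    (hd : ∀ v : V, 0 < G.degree v)
    (α : ℝ) (hα0 : 0 < α) (hα : α ≤ 1 / 3)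
    (p0 : V → ℝ) (us : List V) (u v : V) (huv : G.Adj u v) :
    netFlow G α u v ((fun _ => 0), p0) us =
      (1 - α) / (2 * α) *
        ((runState G α ((fun _ => 0), p0) us).1 u / (G.degree u : ℝ) -
         (runState G α ((fun _ => 0), p0) us).1 v / (G.degree v : ℝ)) :=
  stmt8_general G α hα0 p0 us u v

end
end

section
/- Let G be a finite simple graph with no isolated vertices, let 0 < α ≤ 1/3, and let σ ≥ 0. Consider any run of pushes starting from a state (p₀, r₀) with r₀ ≥ 0 and r₀(v)/d(v) ≤ σ for every vertex v. Then for every ordered pair (u, v) of adjacent vertices, the net flow over (u, v) during the run satisfies |F(u,v)| ≤ σ/(2α). -/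
/-!
Write `P(x)` for the total residual mass pushed from `x` during the run, so that every
edge `(x, y)` carries `t(x) = (1 - α) P(x) / (2 d(x))` from `x` to `y` and the net flow over
`(u, v)` is `t(u) - t(v)`. Residual mass stays nonnegative, and at the end of the run the
residual at `w` is `r₀(w) - (1 + α) P(w) / 2 + ∑_{x ∼ w} t(x)`. At a vertex `w` maximising `t`
the incoming sum is at most `d(w) t(w) = (1 - α) P(w) / 2`, hence `α P(w) ≤ r₀(w) ≤ σ d(w)`
and `t(w) ≤ P(w) / (2 d(w)) ≤ σ / (2α)`. So `0 ≤ t ≤ σ / (2α)` everywhere, and the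
difference `t(u) - t(v)` lies in `[-σ / (2α), σ / (2α)]`.
-/

open scoped Classical
open Finset

noncomputable section

variable {V : Type*} [Fintype V]

def pushedMass (G : SimpleGraph V) (α : ℝ) (w : V) :
    (V → ℝ) × (V → ℝ) → List V → ℝ
  | _, [] => 0
  | s, x :: xs => (if x = w then s.2 w else 0) + pushedMass G α w (push G α x s) xs

def edgeOutflow (G : SimpleGraph V) (α : ℝ) (w : V) (s : (V → ℝ) × (V → ℝ)) (us : List V) :
    ℝ :=
  (1 - α) / (2 * (G.degree w : ℝ)) * pushedMass G α w s us

section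

variable (G : SimpleGraph V) {α : ℝ}

lemma runState_cons (s : (V → ℝ) × (V → ℝ)) (x : V) (xs : List V) :
    runState G α s (x :: xs) = runState G α (push G α x s) xs := rfl

lemma netFlow_eq_edgeOutflow_sub (u v : V) (s : (V → ℝ) × (V → ℝ)) (us : List V) :
    netFlow G α u v s us = edgeOutflow G α u s us - edgeOutflow G α v s us := by
  induction us generalizing s with
  | nil => simp [netFlow, edgeOutflow, pushedMass]
  | cons x xs ih =>
    simp only [netFlow, edgeOutflow, pushedMass, ih]
    split_ifs <;> ring

lemma push_snd_eq (y : V) (s : (V → ℝ) × (V → ℝ)) (w : V) :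
    (push G α y s).2 w =
      s.2 w - (1 + α) / 2 * (if y = w then s.2 w else 0) +
        (if G.Adj y w then (1 - α) / (2 * (G.degree y : ℝ)) * s.2 y else 0) := by
  simp only [push]
  by_cases hyw : y = w
  · subst hyw
    simp only [if_true, G.irrefl, if_false]
    ring
  · simp only [if_neg (Ne.symm hyw), if_neg hyw]
    split_ifs <;> ring

lemma push_snd_nonneg (hα : α ≤ 1) (x : V) {s : (V → ℝ) × (V → ℝ)} (hs : ∀ w, 0 ≤ s.2 w)
    (w : V) : 0 ≤ (push G α x s).2 w := by
  have h1α : 0 ≤ 1 - α := sub_nonneg.2 hα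
  have := hs x
  simp only [push]
  split_ifs
  · positivity
  · have := hs w
    positivity
  · exact hs w

lemma runState_snd_nonneg (hα : α ≤ 1) {s : (V → ℝ) × (V → ℝ)} (hs : ∀ w, 0 ≤ s.2 w)
    (us : List V) (w : V) : 0 ≤ (runState G α s us).2 w := by
  induction us generalizing s with
  | nil => exact hs w
  | cons x xs ih => exact ih (push_snd_nonneg G hα x hs)

lemma pushedMass_nonneg (hα : α ≤ 1) (w : V) {s : (V → ℝ) × (V → ℝ)} (hs : ∀ w, 0 ≤ s.2 w)
    (us : List V) : 0 ≤ pushedMass G α w s us := by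
  induction us generalizing s with
  | nil => exact le_rfl
  | cons x xs ih =>
    have hx : 0 ≤ if x = w then s.2 w else 0 := by
      split_ifs
      exacts [hs w, le_rfl]
    exact add_nonneg hx (ih (push_snd_nonneg G hα x hs))

lemma edgeOutflow_nonneg (hα : α ≤ 1) (w : V) {s : (V → ℝ) × (V → ℝ)}
    (hs : ∀ w, 0 ≤ s.2 w) (us : List V) : 0 ≤ edgeOutflow G α w s us := by
  have h1α : 0 ≤ 1 - α := sub_nonneg.2 hα
  have := pushedMass_nonneg G hα w hs us
  unfold edgeOutflow
  positivity

lemma runState_snd_eq (s : (V → ℝ) × (V → ℝ)) (us : List V) (w : V) :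
    (runState G α s us).2 w =
      s.2 w - (1 + α) / 2 * pushedMass G α w s us +
        ∑ x ∈ G.neighborFinset w, edgeOutflow G α x s us := by
  induction us generalizing s with
  | nil => simp [runState, pushedMass, edgeOutflow]
  | cons y xs ih =>
    have hsplit : ∑ x ∈ G.neighborFinset w, edgeOutflow G α x s (y :: xs) =
        (if G.Adj y w then (1 - α) / (2 * (G.degree y : ℝ)) * s.2 y else 0) +
          ∑ x ∈ G.neighborFinset w, edgeOutflow G α x (push G α y s) xs := by
      simp only [edgeOutflow, pushedMass, mul_add, sum_add_distrib, mul_ite, mul_zero,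
        sum_ite_eq, SimpleGraph.mem_neighborFinset, G.adj_comm w y]
    rw [runState_cons, ih, hsplit, push_snd_eq, pushedMass]
    ring

lemma mul_pushedMass_le_of_forall_edgeOutflow_le (hα : α ≤ 1) {s : (V → ℝ) × (V → ℝ)}
    (hs : ∀ w, 0 ≤ s.2 w) (us : List V) {w : V} (hw : 0 < G.degree w)
    (hmax : ∀ x ∈ G.neighborFinset w, edgeOutflow G α x s us ≤ edgeOutflow G α w s us) :
    α * pushedMass G α w s us ≤ s.2 w := by
  have hin : ∑ x ∈ G.neighborFinset w, edgeOutflow G α x s us ≤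
      (1 - α) / 2 * pushedMass G α w s us :=
    calc ∑ x ∈ G.neighborFinset w, edgeOutflow G α x s us
        ≤ ∑ _x ∈ G.neighborFinset w, edgeOutflow G α w s us := sum_le_sum hmax
      _ = (G.degree w : ℝ) * edgeOutflow G α w s us := by
        rw [sum_const, G.card_neighborFinset_eq_degree, nsmul_eq_mul]
      _ = (1 - α) / 2 * pushedMass G α w s us := by
        unfold edgeOutflow
        field_simp
  have hend := runState_snd_nonneg G hα hs us w
  rw [runState_snd_eq] at hend
  linarith

lemma edgeOutflow_le (hd : ∀ v, 0 < G.degree v) (hα0 : 0 < α) (hα : α ≤ 1) {σ : ℝ}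
    {s : (V → ℝ) × (V → ℝ)} (hs : ∀ w, 0 ≤ s.2 w) (hsσ : ∀ w, s.2 w / (G.degree w : ℝ) ≤ σ)
    (us : List V) (x : V) : edgeOutflow G α x s us ≤ σ / (2 * α) := by
  obtain ⟨w, -, hw⟩ := exists_max_image univ (edgeOutflow G α · s us) ⟨x, mem_univ x⟩
  have hdw : (0 : ℝ) < G.degree w := by exact_mod_cast hd w
  have hP := pushedMass_nonneg G hα w hs us
  have hαP : α * pushedMass G α w s us ≤ σ * G.degree w :=
    calc α * pushedMass G α w s us
        ≤ s.2 w := mul_pushedMass_le_of_forall_edgeOutflow_le G hα hs us (hd w)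
          fun y _ => hw y (mem_univ y)
      _ ≤ σ * G.degree w := (div_le_iff₀ hdw).1 (hsσ w)
  calc edgeOutflow G α x s us
      ≤ edgeOutflow G α w s us := hw x (mem_univ x)
    _ ≤ pushedMass G α w s us / (2 * G.degree w) := by
      rw [edgeOutflow, div_mul_eq_mul_div]
      gcongr
      nlinarith
    _ ≤ σ / (2 * α) := by
      rw [div_le_div_iff₀ (by positivity) (by positivity)]
      nlinarith

end

theorem stmt9_general {V : Type*} [Fintype V] (G : SimpleGraph V)
    (hd : ∀ v : V, 0 < G.degree v)
    (α : ℝ) (hα0 : 0 < α) (hα : α ≤ 1 / 3)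
    (σ : ℝ)
    (init : (V → ℝ) × (V → ℝ))
    (hr0 : ∀ v : V, 0 ≤ init.2 v)
    (hrσ : ∀ v : V, init.2 v / (G.degree v : ℝ) ≤ σ)
    (us : List V) (u v : V) :
    |netFlow G α u v init us| ≤ σ / (2 * α) := by
  have hα1 : α ≤ 1 := by linarith
  rw [netFlow_eq_edgeOutflow_sub, abs_sub_le_iff]
  have hu := edgeOutflow_nonneg G hα1 u hr0 us
  have hv := edgeOutflow_nonneg G hα1 v hr0 us
  have hu' := edgeOutflow_le G hd hα0 hα1 hr0 hrσ us u
  have hv' := edgeOutflow_le G hd hα0 hα1 hr0 hrσ us v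
  constructor <;> linarith

theorem stmt9 {V : Type*} [Fintype V] (G : SimpleGraph V)
    (hd : ∀ v : V, 0 < G.degree v)
    (α : ℝ) (hα0 : 0 < α) (hα : α ≤ 1 / 3)
    (σ : ℝ) (hσ : 0 ≤ σ)
    (init : (V → ℝ) × (V → ℝ))
    (hr0 : ∀ v : V, 0 ≤ init.2 v)
    (hrσ : ∀ v : V, init.2 v / (G.degree v : ℝ) ≤ σ)
    (us : List V) (u v : V) (huv : G.Adj u v) :
    |netFlow G α u v init us| ≤ σ / (2 * α) :=
  stmt9_general G hd α hα0 hα σ init hr0 hrσ us u v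

end
end

section
/- Let G be a finite simple graph with no isolated vertices and m ≥ 1 edges, let 0 < α ≤ 1/3, and let p be the settled mass after any run of pushes starting from (p₀, r₀) with p₀ = 0, r₀ = p° ≥ 0 and ∑_v p°(v) = 1. Suppose 0 ≤ t₀ < τ ≤ 1, vol(V^p_{>t₀}) ≤ m, and V^p_{≥τ} is nonempty. Then there exists t ∈ (t₀, τ] such that Φ(V^p_{≥t}) ≤ sqrt( 42α / ((τ − t₀) · vol(V^p_{≥τ})) ). -/
open scoped Classical
open Finset

noncomputable section

variable {V : Type*} [Fintype V]

/-- The set of vertices of density at least `t` with respect to the mass distribution `p`. -/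
def Vge (G : SimpleGraph V) (p : V → ℝ) (t : ℝ) : Finset V :=
  Finset.univ.filter fun v => t ≤ p v / (G.degree v : ℝ)

/-- The set of vertices of density greater than `t` with respect to the mass distribution `p`. -/
def Vgt (G : SimpleGraph V) (p : V → ℝ) (t : ℝ) : Finset V :=
  Finset.univ.filter fun v => t < p v / (G.degree v : ℝ)

/-- The set of vertices of density less than `t` with respect to the mass distribution `p`. -/
def Vlt (G : SimpleGraph V) (p : V → ℝ) (t : ℝ) : Finset V :=
  Finset.univ.filter fun v => p v / (G.degree v : ℝ) < t

/-!
Along any run of pushes, the quantity `p u + r u + (1 - α) / (2α) · (p u - ∑_{v ∼ u} p v / d v)`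
is unchanged at every vertex `u`. Summed over a set `S`, the last term becomes the total density
drop `∑ (p u / d u - p v / d v)` over the edges `(u, v)` leaving `S`; as `p, r ≥ 0` and the initial
mass is at most `1`, every sweep set `S_t = V^p_{≥t}` has density drop at most
`2α / (1 - α) ≤ 3α` across its boundary.

Suppose `Φ(S_t) > φ` for all `t ∈ (t₀, τ]`. The ordered edge `(u, v)` leaves `S_t` exactly for `t`
in an interval of length `ℓ ≤ p u / d u - p v / d v`; integrating over `t` gives
`∑ ℓ² ≤ 3α (τ - t₀)` and `(τ - t₀) φ ≤ ∑ ℓ / W`, where `W = vol (S_t)` at the top of the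
interval. The edges whose intervals reach at least as high all start in that sweep set, so the
`k`-th largest `W` is at least `max (vol S_τ) k`, whence `∑ 1 / W² ≤ 3 / vol S_τ`.
Cauchy–Schwarz then yields `φ² ≤ 9α / ((τ - t₀) vol S_τ)`, which fails for the `φ` of the theorem.
-/

namespace PushSweep

open MeasureTheory Set

variable (G : SimpleGraph V)

def density (p : V → ℝ) (v : V) : ℝ := p v / (G.degree v : ℝ)

def potential (α : ℝ) (s : (V → ℝ) × (V → ℝ)) (u : V) : ℝ :=
  s.1 u + s.2 u + (1 - α) / (2 * α) * (s.1 u - ∑ v ∈ G.neighborFinset u, density G s.1 v)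

lemma density_push (α : ℝ) (w : V) (s : (V → ℝ) × (V → ℝ)) (v : V) :
    density G (push G α w s).1 v
      = density G s.1 v + if v = w then α * s.2 w / G.degree w else 0 := by
  by_cases h : v = w
  · subst h; simp [density, push, add_div]
  · simp [density, push, h]

lemma potential_push {α : ℝ} (hα : α ≠ 0) (w : V) (s : (V → ℝ) × (V → ℝ)) :
    potential G α (push G α w s) = potential G α s := by
  funext u
  have hnbr : ∑ v ∈ G.neighborFinset u, density G (push G α w s).1 v
      = ∑ v ∈ G.neighborFinset u, density G s.1 v
        + if G.Adj w u then α * s.2 w / G.degree w else 0 := by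
    simp only [density_push, Finset.sum_add_distrib, Finset.sum_ite_eq',
      SimpleGraph.mem_neighborFinset, G.adj_comm u]
  simp only [potential, hnbr]
  by_cases huw : u = w
  · subst huw
    simp only [push, if_true, G.irrefl, if_false]
    field_simp
    ring
  · by_cases hadj : G.Adj w u
    · simp only [push, huw, hadj, if_true, if_false]
      field_simp
      ring
    · simp [push, huw, hadj]

lemma potential_runState {α : ℝ} (hα : α ≠ 0) (s : (V → ℝ) × (V → ℝ)) (us : List V) :
    potential G α (runState G α s us) = potential G α s := by
  induction us generalizing s with
  | nil => rfl
  | cons u us ih => exact (ih (push G α u s)).trans (potential_push G hα u s)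

lemma push_nonneg {α : ℝ} (hα0 : 0 ≤ α) (hα1 : α ≤ 1) (w : V) {s : (V → ℝ) × (V → ℝ)}
    (hs : 0 ≤ s.1 ∧ 0 ≤ s.2) : 0 ≤ (push G α w s).1 ∧ 0 ≤ (push G α w s).2 := by
  obtain ⟨hp, hr⟩ := hs
  have h1α : 0 ≤ 1 - α := by linarith
  refine ⟨fun v => ?_, fun v => ?_⟩ <;> simp only [push, Pi.zero_apply]
  · split_ifs
    · exact add_nonneg (hp w) (mul_nonneg hα0 (hr w))
    · exact hp v
  · have hflow : 0 ≤ (1 - α) * s.2 w := mul_nonneg h1α (hr w)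
    split_ifs
    · exact div_nonneg hflow zero_le_two
    · exact add_nonneg (hr v) (div_nonneg hflow (by positivity))
    · exact hr v

lemma runState_nonneg {α : ℝ} (hα0 : 0 ≤ α) (hα1 : α ≤ 1) {s : (V → ℝ) × (V → ℝ)}
    (hs : 0 ≤ s.1 ∧ 0 ≤ s.2) (us : List V) :
    0 ≤ (runState G α s us).1 ∧ 0 ≤ (runState G α s us).2 := by
  induction us generalizing s with
  | nil => exact hs
  | cons u us ih => exact ih (push_nonneg G hα0 hα1 u hs)

def cutDrop (S : Finset V) (p : V → ℝ) : ℝ :=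
  ∑ u ∈ S, ∑ v ∈ Sᶜ, if G.Adj u v then density G p u - density G p v else 0

lemma cutDrop_eq_sum_sub {S : Finset V} (hS : ∀ u ∈ S, G.degree u ≠ 0) (p : V → ℝ) :
    cutDrop G S p = ∑ u ∈ S, (p u - ∑ v ∈ G.neighborFinset u, density G p v) := by
  set f : V → V → ℝ := fun u v => if G.Adj u v then density G p u - density G p v else 0
  have hinner : ∑ u ∈ S, ∑ v ∈ S, f u v = 0 := by
    have hanti : ∀ u v, f v u = - f u v := by
      intro u v; simp only [f]; rw [G.adj_comm]; split_ifs <;> ring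
    have hswap : ∑ u ∈ S, ∑ v ∈ S, f v u = -∑ u ∈ S, ∑ v ∈ S, f u v := by
      simp only [← Finset.sum_neg_distrib]
      exact Finset.sum_congr rfl fun u _ => Finset.sum_congr rfl fun v _ => hanti u v
    linarith [Finset.sum_comm (s := S) (t := S) (f := f)]
  have hrow : ∀ u ∈ S, ∑ v, f u v = p u - ∑ v ∈ G.neighborFinset u, density G p v := by
    intro u hu
    rw [← Finset.sum_filter, ← SimpleGraph.neighborFinset_eq_filter, Finset.sum_sub_distrib,
      Finset.sum_const, SimpleGraph.card_neighborFinset_eq_degree, nsmul_eq_mul, density,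
      mul_div_cancel₀ _ (by exact_mod_cast hS u hu)]
  rw [cutDrop, ← Finset.sum_congr rfl hrow]
  simp_rw [← Finset.sum_compl_add_sum S]
  rw [Finset.sum_add_distrib, hinner, add_zero]

lemma sum_potential_eq {S : Finset V} (hS : ∀ u ∈ S, G.degree u ≠ 0) (α : ℝ)
    (s : (V → ℝ) × (V → ℝ)) :
    ∑ u ∈ S, potential G α s u
      = ∑ u ∈ S, (s.1 u + s.2 u) + (1 - α) / (2 * α) * cutDrop G S s.1 := by
  rw [cutDrop_eq_sum_sub G hS, Finset.mul_sum, ← Finset.sum_add_distrib]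
  rfl

lemma cutDrop_runState_le {α : ℝ} (hα0 : 0 < α) (hα : α ≤ 1 / 3) (hd : ∀ v, 0 < G.degree v)
    {p0 : V → ℝ} (hp0 : 0 ≤ p0) (hsum : ∑ v, p0 v ≤ 1) (us : List V) (S : Finset V) :
    cutDrop G S (runState G α ((fun _ => 0), p0) us).1 ≤ 3 * α := by
  set s := runState G α ((fun _ => 0), p0) us
  have hs := runState_nonneg G hα0.le (by linarith) (s := ((fun _ => 0), p0)) ⟨le_rfl, hp0⟩ us
  have hconserved : ∑ u ∈ S, potential G α s u = ∑ u ∈ S, p0 u := by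
    rw [potential_runState G hα0.ne']
    simp [potential, density]
  have hmass : 0 ≤ ∑ u ∈ S, (s.1 u + s.2 u) :=
    Finset.sum_nonneg fun u _ => add_nonneg (hs.1 u) (hs.2 u)
  have hS : ∑ u ∈ S, p0 u ≤ 1 :=
    (Finset.sum_le_sum_of_subset_of_nonneg S.subset_univ fun v _ _ => hp0 v).trans hsum
  have hdrop : (1 - α) / (2 * α) * cutDrop G S s.1 ≤ 1 := by
    rw [sum_potential_eq G (fun u _ => (hd u).ne')] at hconserved
    linarith
  rw [div_mul_eq_mul_div, div_le_one (by positivity)] at hdrop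
  nlinarith

lemma integrable_indicator_Ioc (a b c : ℝ) : Integrable ((Ioc a b).indicator fun _ => c) :=
  (integrableOn_const (by simp)).integrable_indicator measurableSet_Ioc

lemma integral_indicator_Ioc (a b c : ℝ) :
    ∫ x, (Ioc a b).indicator (fun _ => c) x = max (b - a) 0 * c := by
  rw [integral_indicator_const c measurableSet_Ioc, Real.volume_real_Ioc, smul_eq_mul]

lemma integrable_sum_indicator_Ioc {ι : Type*} (s : Finset ι) (a b c : ι → ℝ) :
    Integrable fun x => ∑ i ∈ s, (Ioc (a i) (b i)).indicator (fun _ => c i) x :=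
  integrable_finsetSum s fun i _ => integrable_indicator_Ioc (a i) (b i) (c i)

lemma integral_sum_indicator_Ioc {ι : Type*} (s : Finset ι) (a b c : ι → ℝ) :
    ∫ x, ∑ i ∈ s, (Ioc (a i) (b i)).indicator (fun _ => c i) x
      = ∑ i ∈ s, max (b i - a i) 0 * c i := by
  rw [integral_finsetSum s fun i _ => integrable_indicator_Ioc (a i) (b i) (c i)]
  simp only [integral_indicator_Ioc]

lemma sum_antitone_card_filter_le {ι : Type*} [DecidableEq ι] {F : ℕ → ℝ} (hF : Antitone F)
    (θ : ι → ℝ) (s : Finset ι) :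
    ∑ i ∈ s, F #{j ∈ s | θ i ≤ θ j} ≤ ∑ k ∈ Icc 1 #s, F k := by
  induction s using Finset.induction_on_min_value θ with
  | empty => simp
  | insert a s ha hmin ih =>
    have htop : #{j ∈ insert a s | θ a ≤ θ j} = #s + 1 := by
      rw [Finset.filter_true_of_mem fun j hj => ?_, Finset.card_insert_of_notMem ha]
      rcases Finset.mem_insert.1 hj with rfl | hj
      exacts [le_rfl, hmin j hj]
    have hrest : ∀ i ∈ s, F #{j ∈ insert a s | θ i ≤ θ j} ≤ F #{j ∈ s | θ i ≤ θ j} :=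
      fun i _ => hF (Finset.card_le_card
        (Finset.filter_subset_filter _ (Finset.subset_insert a s)))
    rw [Finset.sum_insert ha, htop, Finset.card_insert_of_notMem ha,
      Finset.sum_Icc_succ_top (by omega), add_comm]
    exact add_le_add_left ((Finset.sum_le_sum hrest).trans ih) _

lemma sum_inv_max_sq_le (K N : ℕ) (hK : 0 < K) :
    ∑ k ∈ Icc 1 N, ((max K k : ℕ) : ℝ)⁻¹ ^ 2 ≤ 3 / K := by
  have hKR : (0 : ℝ) < K := by exact_mod_cast hK
  rw [← Finset.sum_filter_add_sum_filter_not _ (· ≤ K)]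
  have hlow : ∑ k ∈ Icc 1 N with k ≤ K, ((max K k : ℕ) : ℝ)⁻¹ ^ 2 ≤ 1 / K := by
    calc ∑ k ∈ Icc 1 N with k ≤ K, ((max K k : ℕ) : ℝ)⁻¹ ^ 2
        = #{k ∈ Icc 1 N | k ≤ K} * (K : ℝ)⁻¹ ^ 2 := by
          rw [Finset.sum_congr rfl fun k hk => by rw [max_eq_left (Finset.mem_filter.1 hk).2],
            Finset.sum_const, nsmul_eq_mul]
      _ ≤ K * (K : ℝ)⁻¹ ^ 2 := by
          gcongr
          calc #{k ∈ Icc 1 N | k ≤ K} ≤ #(Icc 1 K) := Finset.card_le_card fun k hk => by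
                simp only [Finset.mem_filter, Finset.mem_Icc] at hk ⊢; omega
            _ = K := by simp
      _ = 1 / K := by field_simp
  have hhigh : ∑ k ∈ Icc 1 N with ¬k ≤ K, ((max K k : ℕ) : ℝ)⁻¹ ^ 2 ≤ 2 / K := by
    calc ∑ k ∈ Icc 1 N with ¬k ≤ K, ((max K k : ℕ) : ℝ)⁻¹ ^ 2
        = ∑ k ∈ Icc 1 N with ¬k ≤ K, ((k : ℝ) ^ 2)⁻¹ := by
          refine Finset.sum_congr rfl fun k hk => ?_
          rw [max_eq_right (not_le.1 (Finset.mem_filter.1 hk).2).le, inv_pow]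
      _ ≤ ∑ k ∈ Ioo K (N + 1), ((k : ℝ) ^ 2)⁻¹ :=
          Finset.sum_le_sum_of_subset_of_nonneg
            (fun k hk => by
              simp only [Finset.mem_filter, Finset.mem_Icc, Finset.mem_Ioo] at hk ⊢; omega)
            fun _ _ _ => by positivity
      _ ≤ 2 / (K + 1) := sum_Ioo_inv_sq_le K (N + 1)
      _ ≤ 2 / K := by gcongr; linarith
  calc _ ≤ 1 / (K : ℝ) + 2 / K := add_le_add hlow hhigh
    _ = 3 / K := by ring

lemma sum_inv_sq_le_of_card_le {ι : Type*} [DecidableEq ι] (K : ℕ) (hK : 0 < K) (θ W : ι → ℝ)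
    (s : Finset ι) (hWK : ∀ i ∈ s, (K : ℝ) ≤ W i) (hW : ∀ i ∈ s, (#{j ∈ s | θ i ≤ θ j} : ℝ) ≤ W i) :
    ∑ i ∈ s, (W i)⁻¹ ^ 2 ≤ 3 / K := by
  set F : ℕ → ℝ := fun k => ((max K k : ℕ) : ℝ)⁻¹ ^ 2
  have hF : Antitone F := fun k k' hkk' => by
    have : (0 : ℝ) < (max K k : ℕ) := by exact_mod_cast lt_max_of_lt_left hK
    simp only [F]
    gcongr
  calc ∑ i ∈ s, (W i)⁻¹ ^ 2 ≤ ∑ i ∈ s, F #{j ∈ s | θ i ≤ θ j} := by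
        refine Finset.sum_le_sum fun i hi => ?_
        have hpos : (0 : ℝ) < (max K #{j ∈ s | θ i ≤ θ j} : ℕ) := by
          exact_mod_cast lt_max_of_lt_left hK
        have hle : ((max K #{j ∈ s | θ i ≤ θ j} : ℕ) : ℝ) ≤ W i := by
          push_cast
          exact max_le (hWK i hi) (hW i hi)
        exact pow_le_pow_left₀ (inv_nonneg.2 (hpos.trans_le hle).le) (inv_anti₀ hpos hle) 2
    _ ≤ ∑ k ∈ Icc 1 #s, F k := sum_antitone_card_filter_le hF θ s
    _ ≤ 3 / K := sum_inv_max_sq_le K #s hK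

variable (p : V → ℝ)

lemma mem_Vge {t : ℝ} {v : V} : v ∈ Vge G p t ↔ t ≤ density G p v := by
  simp [Vge, density]

lemma Vge_anti {t t' : ℝ} (h : t ≤ t') : Vge G p t' ⊆ Vge G p t := fun v hv => by
  rw [mem_Vge] at hv ⊢; linarith

lemma Vge_subset_Vgt {t0 t : ℝ} (h : t0 < t) : Vge G p t ⊆ Vgt G p t0 := fun v hv => by
  rw [mem_Vge] at hv
  simpa [Vgt, density] using h.trans_le hv

lemma vol_mono {S T : Finset V} (h : S ⊆ T) : vol G S ≤ vol G T :=
  Finset.sum_le_sum_of_subset h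

lemma vol_pos {S : Finset V} (hd : ∀ v, 0 < G.degree v) (hS : S.Nonempty) : 0 < vol G S :=
  Finset.sum_pos (fun v _ => hd v) hS

lemma mul_vol_le_card_bdry_of_lt_conduct {S : Finset V} {φ : ℝ}
    (hS : vol G S ≤ G.edgeFinset.card) (hpos : 0 < vol G S) (hφ : φ < conduct G S) :
    φ * vol G S ≤ #(bdry G S) := by
  rw [conduct, min_eq_left (by omega), lt_div_iff₀ (by exact_mod_cast hpos)] at hφ
  exact hφ.le

def edgesOut (S : Finset V) : Finset (V × V) := (S ×ˢ Sᶜ).filter fun q => G.Adj q.1 q.2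

lemma cutDrop_eq_sum_edgesOut (S : Finset V) :
    cutDrop G S p = ∑ q ∈ edgesOut G S, (density G p q.1 - density G p q.2) := by
  rw [cutDrop, edgesOut, Finset.sum_filter, Finset.sum_product]

lemma card_bdry_le_card_edgesOut (S : Finset V) : #(bdry G S) ≤ #(edgesOut G S) := by
  refine (Finset.card_le_card fun e he => ?_).trans
    (Finset.card_image_le (f := fun q : V × V => s(q.1, q.2)))
  obtain ⟨he, u, v, hu, hv, rfl⟩ := Finset.mem_filter.1 he
  exact Finset.mem_image.2 ⟨(u, v), by simp_all [edgesOut], rfl⟩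

lemma card_adj_filter_fst_mem (T : Finset V) :
    #{q : V × V | G.Adj q.1 q.2 ∧ q.1 ∈ T} = vol G T := by
  rw [show ({q : V × V | G.Adj q.1 q.2 ∧ q.1 ∈ T} : Finset _)
      = (T ×ˢ Finset.univ).filter (fun q => G.Adj q.1 q.2) by ext; simp [and_comm],
    Finset.card_filter, Finset.sum_product, vol]
  refine Finset.sum_congr rfl fun u _ => ?_
  rw [← Finset.card_filter, ← SimpleGraph.neighborFinset_eq_filter,
    SimpleGraph.card_neighborFinset_eq_degree]

def sweepLow (t0 : ℝ) (q : V × V) : ℝ := max t0 (density G p q.2)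

def sweepHigh (τ : ℝ) (q : V × V) : ℝ := min τ (density G p q.1)

def sweepLength (t0 τ : ℝ) (q : V × V) : ℝ := max (sweepHigh G p τ q - sweepLow G p t0 q) 0

lemma sweepHigh_le (τ : ℝ) (q : V × V) : sweepHigh G p τ q ≤ τ := min_le_left _ _

lemma mem_Ioc_sweepLow_sweepHigh {t0 τ t : ℝ} {q : V × V} :
    t ∈ Ioc (sweepLow G p t0 q) (sweepHigh G p τ q)
      ↔ t ∈ Ioc t0 τ ∧ q.1 ∈ Vge G p t ∧ q.2 ∉ Vge G p t := by
  simp only [sweepLow, sweepHigh, Set.mem_Ioc, max_lt_iff, le_min_iff, mem_Vge, not_le]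
  tauto

lemma sum_indicator_sweep (t0 τ : ℝ) (c : V × V → ℝ) (t : ℝ) :
    ∑ q : V × V with G.Adj q.1 q.2,
        (Ioc (sweepLow G p t0 q) (sweepHigh G p τ q)).indicator (fun _ => c q) t
      = (Ioc t0 τ).indicator (fun _ => ∑ q ∈ edgesOut G (Vge G p t), c q) t := by
  simp only [indicator_apply]
  rw [← Finset.sum_filter, Finset.filter_filter]
  split_ifs with ht
  · refine Finset.sum_congr (Finset.ext fun q => ?_) fun _ _ => rfl
    simp only [Finset.mem_filter, Finset.mem_univ, true_and, mem_Ioc_sweepLow_sweepHigh, edgesOut,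
      Finset.mem_product, Finset.mem_compl]
    tauto
  · refine Finset.sum_eq_zero fun q hq => ?_
    simp only [Finset.mem_filter, mem_Ioc_sweepLow_sweepHigh] at hq
    exact absurd hq.2.2.1 ht

lemma sum_sweepLength_mul_gap_le {t0 τ β : ℝ}
    (hcut : ∀ t ∈ Ioc t0 τ, cutDrop G (Vge G p t) p ≤ β) :
    ∑ q : V × V with G.Adj q.1 q.2, sweepLength G p t0 τ q
        * (density G p q.1 - density G p q.2) ≤ max (τ - t0) 0 * β := by
  have := integral_mono (integrable_sum_indicator_Ioc _ (sweepLow G p t0) (sweepHigh G p τ)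
      fun q => density G p q.1 - density G p q.2) (integrable_indicator_Ioc t0 τ β) fun t => by
    rw [sum_indicator_sweep]
    exact indicator_le_indicator' fun ht => (cutDrop_eq_sum_edgesOut G p _).ge.trans (hcut t ht)
  rwa [integral_sum_indicator_Ioc, integral_indicator_Ioc] at this

lemma le_sum_sweepLength_mul_inv_vol {t0 τ φ : ℝ} (hK : 0 < vol G (Vge G p τ))
    (hbdry : ∀ t ∈ Ioc t0 τ, φ * vol G (Vge G p t) ≤ #(bdry G (Vge G p t))) :
    max (τ - t0) 0 * φ ≤ ∑ q : V × V with G.Adj q.1 q.2,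
      sweepLength G p t0 τ q
        * ((vol G (Vge G p (sweepHigh G p τ q)) : ℕ) : ℝ)⁻¹ := by
  have hvol_pos : ∀ t ≤ τ, (0 : ℝ) < vol G (Vge G p t) := fun t ht => by
    exact_mod_cast hK.trans_le (vol_mono G (Vge_anti G p ht))
  have := integral_mono (integrable_indicator_Ioc t0 τ φ)
      (integrable_sum_indicator_Ioc _ (sweepLow G p t0) (sweepHigh G p τ)
        fun q => ((vol G (Vge G p (sweepHigh G p τ q)) : ℕ) : ℝ)⁻¹) fun t => by
    rw [sum_indicator_sweep]
    refine indicator_le_indicator' fun ht => ?_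
    have hvt := hvol_pos t ht.2
    calc φ ≤ #(edgesOut G (Vge G p t)) * ((vol G (Vge G p t) : ℕ) : ℝ)⁻¹ := by
          rw [← div_eq_mul_inv, le_div_iff₀ hvt]
          exact (hbdry t ht).trans (by exact_mod_cast card_bdry_le_card_edgesOut G _)
      _ = ∑ q ∈ edgesOut G (Vge G p t), ((vol G (Vge G p t) : ℕ) : ℝ)⁻¹ := by
          rw [Finset.sum_const, nsmul_eq_mul]
      _ ≤ ∑ q ∈ edgesOut G (Vge G p t), ((vol G (Vge G p (sweepHigh G p τ q)) : ℕ) : ℝ)⁻¹ := by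
          refine Finset.sum_le_sum fun q hq => ?_
          have hq1 : t ≤ density G p q.1 := by
            simp only [edgesOut, Finset.mem_filter, Finset.mem_product, mem_Vge] at hq
            exact hq.1.1
          refine inv_anti₀ (hvol_pos _ (sweepHigh_le G p τ q)) ?_
          exact_mod_cast vol_mono G (Vge_anti G p (le_min ht.2 hq1))
  rwa [integral_sum_indicator_Ioc, integral_indicator_Ioc] at this

lemma sq_sweepLength_le (t0 τ : ℝ) (q : V × V) :
    sweepLength G p t0 τ q ^ 2
      ≤ sweepLength G p t0 τ q * (density G p q.1 - density G p q.2) := by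
  simp only [sweepLength, sweepHigh, sweepLow]
  rcases le_total (min τ (density G p q.1) - max t0 (density G p q.2)) 0 with h | h
  · simp [max_eq_right h]
  · rw [max_eq_left h, sq]
    refine mul_le_mul_of_nonneg_left ?_ h
    linarith [min_le_right τ (density G p q.1), le_max_right t0 (density G p q.2)]

theorem sq_mul_le_of_forall_le_card_bdry {t0 τ β φ : ℝ} (htτ : t0 ≤ τ) (hφ : 0 ≤ φ)
    (hK : 0 < vol G (Vge G p τ))
    (hcut : ∀ t ∈ Ioc t0 τ, cutDrop G (Vge G p t) p ≤ β)
    (hbdry : ∀ t ∈ Ioc t0 τ, φ * vol G (Vge G p t) ≤ #(bdry G (Vge G p t))) :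
    ((τ - t0) * φ) ^ 2 ≤ (τ - t0) * β * (3 / vol G (Vge G p τ)) := by
  set D : Finset (V × V) := {q | G.Adj q.1 q.2}
  set ℓ := sweepLength G p t0 τ
  set W : V × V → ℝ := fun q => vol G (Vge G p (sweepHigh G p τ q))
  have hA := le_sum_sweepLength_mul_inv_vol G p hK hbdry
  have hB := sum_sweepLength_mul_gap_le G p hcut
  rw [max_eq_left (sub_nonneg.2 htτ)] at hA hB
  have hℓ : ∑ q ∈ D, ℓ q ^ 2 ≤ (τ - t0) * β :=
    (Finset.sum_le_sum fun q _ => sq_sweepLength_le G p t0 τ q).trans hB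
  have hW : ∑ q ∈ D, (W q)⁻¹ ^ 2 ≤ 3 / vol G (Vge G p τ) := by
    refine sum_inv_sq_le_of_card_le _ hK (sweepHigh G p τ) W D (fun q _ => ?_) fun q _ => ?_
    · simp only [W]
      exact_mod_cast vol_mono G (Vge_anti G p (sweepHigh_le G p τ q))
    · simp only [W, D, ← card_adj_filter_fst_mem]
      refine Nat.cast_le.2 (Finset.card_le_card fun q' hq' => ?_)
      simp only [Finset.mem_filter, Finset.mem_univ, true_and, mem_Vge] at hq' ⊢
      exact ⟨hq'.1, hq'.2.trans (min_le_right _ _)⟩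
  calc ((τ - t0) * φ) ^ 2 ≤ (∑ q ∈ D, ℓ q * (W q)⁻¹) ^ 2 :=
        pow_le_pow_left₀ (mul_nonneg (sub_nonneg.2 htτ) hφ) hA 2
    _ ≤ (∑ q ∈ D, ℓ q ^ 2) * ∑ q ∈ D, (W q)⁻¹ ^ 2 := Finset.sum_mul_sq_le_sq_mul_sq _ _ _
    _ ≤ (τ - t0) * β * (3 / vol G (Vge G p τ)) :=
        mul_le_mul hℓ hW (Finset.sum_nonneg fun _ _ => sq_nonneg _)
          ((Finset.sum_nonneg fun _ _ => sq_nonneg _).trans hℓ)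

end PushSweep

open PushSweep

theorem stmt11_general {V : Type*} [Fintype V] (G : SimpleGraph V)
    (m : ℕ) (hm : m = G.edgeFinset.card)
    (hd : ∀ v : V, 0 < G.degree v)
    (α : ℝ) (hα0 : 0 < α) (hα : α ≤ 1 / 3)
    (p0 : V → ℝ) (hp0 : ∀ v, 0 ≤ p0 v) (hsum : ∑ v, p0 v = 1)
    (us : List V)
    (p : V → ℝ) (hp : p = (runState G α ((fun _ => 0), p0) us).1)
    (t0 τ : ℝ) (htτ : t0 < τ)
    (hvol : vol G (Vgt G p t0) ≤ m)
    (hne : (Vge G p τ).Nonempty) :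
    ∃ t : ℝ, t0 < t ∧ t ≤ τ ∧
      conduct G (Vge G p t) ≤
        Real.sqrt (42 * α / ((τ - t0) * (vol G (Vge G p τ) : ℝ))) := by
  by_contra! hcon
  have hK := vol_pos G hd hne
  have hbdry : ∀ t ∈ Set.Ioc t0 τ, √(42 * α / ((τ - t0) * (vol G (Vge G p τ) : ℝ)))
      * vol G (Vge G p t) ≤ #(bdry G (Vge G p t)) := by
    rintro t ⟨ht0t, htτ⟩
    exact mul_vol_le_card_bdry_of_lt_conduct G
      ((vol_mono G (Vge_subset_Vgt G p ht0t)).trans (hm ▸ hvol))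
      (hK.trans_le (vol_mono G (Vge_anti G p htτ))) (hcon t ht0t htτ)
  have hcut : ∀ t ∈ Set.Ioc t0 τ, cutDrop G (Vge G p t) p ≤ 3 * α := fun t _ => by
    rw [hp]; exact cutDrop_runState_le G hα0 hα hd hp0 hsum.le us _
  have hsweep := sq_mul_le_of_forall_le_card_bdry G p htτ.le (Real.sqrt_nonneg _) hK hcut hbdry
  rw [mul_pow, Real.sq_sqrt (by positivity)] at hsweep
  field_simp at hsweep
  linarith

theorem stmt11 {V : Type*} [Fintype V] (G : SimpleGraph V)
    (m : ℕ) (hm : m = G.edgeFinset.card) (hm1 : 1 ≤ m)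
    (hd : ∀ v : V, 0 < G.degree v)
    (α : ℝ) (hα0 : 0 < α) (hα : α ≤ 1 / 3)
    (p0 : V → ℝ) (hp0 : ∀ v, 0 ≤ p0 v) (hsum : ∑ v, p0 v = 1)
    (us : List V)
    (p : V → ℝ) (hp : p = (runState G α ((fun _ => 0), p0) us).1)
    (t0 τ : ℝ) (ht0 : 0 ≤ t0) (htτ : t0 < τ) (hτ1 : τ ≤ 1)
    (hvol : vol G (Vgt G p t0) ≤ m)
    (hne : (Vge G p τ).Nonempty) :
    ∃ t : ℝ, t0 < t ∧ t ≤ τ ∧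
      conduct G (Vge G p t) ≤
        Real.sqrt (42 * α / ((τ - t0) * (vol G (Vge G p τ) : ℝ))) :=
  stmt11_general G m hm hd α hα0 hα p0 hp0 hsum us p hp t0 τ htτ hvol hne
end
end

section
/- Let G be a finite simple graph with no isolated vertices and m ≥ 1 edges, let 0 < α ≤ 1/3, and let p be the settled mass after any run of pushes starting from (p₀, r₀) with p₀ = 0, r₀ = p° ≥ 0 and ∑_v p°(v) = 1. Suppose 0 ≤ τ < t₀, vol(V^p_{<t₀}) ≤ m, and V^p_{<τ} is nonempty. Then there exists t ∈ [τ, t₀) such that Φ(V^p_{<t}) ≤ sqrt( 42α / ((t₀ − τ) · vol(V^p_{<τ})) ). -/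
open scoped Classical
open Finset

noncomputable section

variable {V : Type*} [Fintype V]

/-!
Every state reachable by pushes from `(0, p₀)` satisfies `p = pr_α(p₀ - r)` with `r ≥ 0`; for
`α ≤ 1/3` this gives the local bound `p v - ∑_{u ~ v} p u / d u ≤ 3 α p₀ v`. Summed over the
complement of a level set `S = V_{<t}`, it shows that the density jumps `p/d` across the edges
of `∂S` add up to at most `3α`. If every level set for `t ∈ [τ, t₀)` had conductance above `φ`,
fewer than half of the `|∂S| > φ vol S` boundary edges could have a jump `≥ 6α / (φ vol S)`, so
the others enter the next level set and `vol V_{<t + 6α/(φ vol S)} ≥ (1 + φ/2) vol S`.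
Iterating, the volume grows geometrically while the thresholds advance by a geometric series;
for `φ² = 42 α / ((t₀ - τ) vol V_{<τ})` that series stays below `t₀ - τ`, so the volume would
exceed `m`.
-/

/-- The pointwise form, multiplied by `2`, of `p = pr_α(p₀ - r)`, where `pr_α` is the personalized
PageRank vector for the lazy walk `(I + A D⁻¹) / 2`. -/
def PushInvariant (G : SimpleGraph V) (α : ℝ) (p0 : V → ℝ) (s : (V → ℝ) × (V → ℝ)) : Prop :=
  ∀ v, 2 * α * s.2 v = 2 * α * p0 v
    + (1 - α) * ∑ u ∈ G.neighborFinset v, s.1 u / G.degree u - (1 + α) * s.1 v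

section Push

variable {G : SimpleGraph V} {α : ℝ}

lemma pushInvariant_push {p0 : V → ℝ} {s : (V → ℝ) × (V → ℝ)} (hs : PushInvariant G α p0 s)
    (w : V) : PushInvariant G α p0 (push G α w s) := by
  have hsum : ∀ v, ∑ u ∈ G.neighborFinset v, (push G α w s).1 u / G.degree u
      = ∑ u ∈ G.neighborFinset v, s.1 u / G.degree u
        + if w ∈ G.neighborFinset v then α * s.2 w / G.degree w else 0 := by
    intro v
    rw [← Finset.sum_ite_eq' _ w (fun u => α * s.2 u / G.degree u), ← Finset.sum_add_distrib]
    refine Finset.sum_congr rfl fun u _ => ?_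
    by_cases h : u = w
    · subst h; simp [push, add_div]
    · simp [push, h]
  intro v
  rw [hsum]
  rcases eq_or_ne v w with rfl | hvw
  · simp only [push, if_true, SimpleGraph.mem_neighborFinset, SimpleGraph.irrefl, if_false]
    linear_combination hs v
  · by_cases hadj : G.Adj w v
    · simp only [push, if_neg hvw, if_pos hadj, SimpleGraph.mem_neighborFinset, if_pos hadj.symm]
      linear_combination hs v
    · simp only [push, if_neg hvw, if_neg hadj, SimpleGraph.mem_neighborFinset,
        G.adj_comm v w]
      linear_combination hs v

lemma pushInvariant_runState {p0 : V → ℝ} {s : (V → ℝ) × (V → ℝ)}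
    (hs : PushInvariant G α p0 s) (us : List V) : PushInvariant G α p0 (runState G α s us) := by
  induction us generalizing s with
  | nil => exact hs
  | cons u us ih => exact ih (pushInvariant_push hs u)

lemma push_nonneg (hα0 : 0 ≤ α) (hα1 : α ≤ 1) {s : (V → ℝ) × (V → ℝ)} (h1 : 0 ≤ s.1)
    (h2 : 0 ≤ s.2) (u : V) : 0 ≤ (push G α u s).1 ∧ 0 ≤ (push G α u s).2 := by
  have h1a : 0 ≤ 1 - α := by linarith
  constructor <;> intro v <;> simp only [push, Pi.zero_apply]
  · split_ifs
    · exact add_nonneg (h1 u) (mul_nonneg hα0 (h2 u))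
    · exact h1 v
  · split_ifs
    · exact div_nonneg (mul_nonneg h1a (h2 u)) zero_le_two
    · exact add_nonneg (h2 v) (div_nonneg (mul_nonneg h1a (h2 u)) (by positivity))
    · exact h2 v

lemma runState_nonneg (hα0 : 0 ≤ α) (hα1 : α ≤ 1) {s : (V → ℝ) × (V → ℝ)} (h1 : 0 ≤ s.1)
    (h2 : 0 ≤ s.2) (us : List V) : 0 ≤ (runState G α s us).1 ∧ 0 ≤ (runState G α s us).2 := by
  induction us generalizing s with
  | nil => exact ⟨h1, h2⟩
  | cons u us ih =>
    obtain ⟨h1', h2'⟩ := push_nonneg hα0 hα1 h1 h2 u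
    exact ih h1' h2'

lemma runState_fst_sub_sum_le (hα0 : 0 ≤ α) (hα : α ≤ 1 / 3) {p0 : V → ℝ} (hp0 : 0 ≤ p0)
    {us : List V} {p : V → ℝ} (hp : p = (runState G α ((fun _ => 0), p0) us).1) (v : V) :
    p v - ∑ u ∈ G.neighborFinset v, p u / G.degree u ≤ 3 * α * p0 v := by
  have hinv : PushInvariant G α p0 ((fun _ => 0), p0) := fun v => by simp
  obtain ⟨hpnn, hr⟩ := runState_nonneg (s := ((fun _ => 0), p0)) hα0 (by linarith) le_rfl hp0 us
  have h := pushInvariant_runState hinv us v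
  rw [← hp] at h hpnn
  have hrv : 0 ≤ α * (runState G α ((fun _ => 0), p0) us).2 v := mul_nonneg hα0 (hr v)
  have hpv : 0 ≤ α * p v := mul_nonneg hα0 (hpnn v)
  have hp0v : 0 ≤ α * (1 - 3 * α) * p0 v := mul_nonneg (mul_nonneg hα0 (by linarith)) (hp0 v)
  have key : (1 - α) * (p v - ∑ u ∈ G.neighborFinset v, p u / G.degree u)
      ≤ (1 - α) * (3 * α * p0 v) := by
    linarith
  exact le_of_mul_le_mul_left key (by linarith)

end Push

def cutPairs (G : SimpleGraph V) (S : Finset V) : Finset (V × V) :=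
  (S ×ˢ Sᶜ).filter fun x => G.Adj x.1 x.2

lemma sum_sum_adj_sub_eq_zero {W : Type*} (G : SimpleGraph W) (A : Finset W) (q : W → ℝ) :
    ∑ v ∈ A, ∑ u ∈ A, (if G.Adj v u then q v - q u else 0) = 0 := by
  have h : ∑ v ∈ A, ∑ u ∈ A, (if G.Adj v u then q v - q u else 0)
      = -∑ v ∈ A, ∑ u ∈ A, (if G.Adj v u then q v - q u else 0) := by
    conv_lhs => rw [Finset.sum_comm]
    simp only [← Finset.sum_neg_distrib]
    refine Finset.sum_congr rfl fun u _ => Finset.sum_congr rfl fun v _ => ?_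
    rw [G.adj_comm]
    split_ifs <;> ring
  linarith

section Cut

variable {G : SimpleGraph V}

lemma mem_cutPairs {S : Finset V} {x : V × V} :
    x ∈ cutPairs G S ↔ x.1 ∈ S ∧ x.2 ∉ S ∧ G.Adj x.1 x.2 := by
  simp [cutPairs, and_assoc]

lemma card_bdry_eq_card_cutPairs (S : Finset V) : (bdry G S).card = (cutPairs G S).card := by
  refine (Finset.card_bij (fun x _ => s(x.1, x.2)) ?_ ?_ ?_).symm
  · intro x hx
    rw [mem_cutPairs] at hx
    simp only [bdry, Finset.mem_filter, SimpleGraph.mem_edgeFinset, SimpleGraph.mem_edgeSet]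
    exact ⟨hx.2.2, x.1, x.2, hx.1, hx.2.1, rfl⟩
  · rintro ⟨a, b⟩ hx ⟨c, d⟩ hy hxy
    rw [mem_cutPairs] at hx hy
    rcases Sym2.eq_iff.mp hxy with ⟨rfl, rfl⟩ | ⟨rfl, rfl⟩
    · rfl
    · exact absurd hx.1 hy.2.1
  · intro e he
    simp only [bdry, Finset.mem_filter, SimpleGraph.mem_edgeFinset] at he
    obtain ⟨he, u, v, hu, hv, rfl⟩ := he
    exact ⟨(u, v), mem_cutPairs.mpr ⟨hu, hv, he⟩, rfl⟩

lemma card_le_vol_of_adj_snd_mem {A : Finset (V × V)} {U : Finset V}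
    (hA : ∀ x ∈ A, G.Adj x.1 x.2 ∧ x.2 ∈ U) : A.card ≤ vol G U := by
  rw [Finset.card_eq_sum_card_fiberwise (f := Prod.snd) (t := U) fun x hx => (hA x hx).2, vol]
  refine Finset.sum_le_sum fun u _ => ?_
  rw [← SimpleGraph.card_neighborFinset_eq_degree]
  refine Finset.card_le_card_of_injOn Prod.fst (fun x hx => ?_) (fun x hx y hy hxy => ?_)
  · rw [Finset.mem_coe, Finset.mem_filter] at hx
    simpa [← hx.2] using (hA x hx.1).1.symm
  · rw [Finset.mem_coe, Finset.mem_filter] at hx hy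
    exact Prod.ext hxy (hx.2.trans hy.2.symm)

lemma card_cutPairs_le_vol (S : Finset V) : (cutPairs G S).card ≤ vol G S := by
  rw [← Finset.card_image_of_injective _ Prod.swap_injective]
  refine card_le_vol_of_adj_snd_mem fun x hx => ?_
  obtain ⟨y, hy, rfl⟩ := Finset.mem_image.mp hx
  rw [mem_cutPairs] at hy
  exact ⟨hy.2.2.symm, hy.1⟩

lemma conduct_eq_of_vol_le {S : Finset V} (h : vol G S ≤ G.edgeFinset.card) :
    conduct G S = (cutPairs G S).card / vol G S := by
  rw [conduct, card_bdry_eq_card_cutPairs, min_eq_left (by omega)]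

lemma sum_cutPairs_sub (S : Finset V) (q : V → ℝ) :
    ∑ x ∈ cutPairs G S, (q x.2 - q x.1) = ∑ v ∈ Sᶜ, ∑ u ∈ G.neighborFinset v, (q v - q u) := by
  have hnbr : ∀ v, ∑ u ∈ G.neighborFinset v, (q v - q u)
      = ∑ u ∈ S, (if G.Adj v u then q v - q u else 0)
        + ∑ u ∈ Sᶜ, (if G.Adj v u then q v - q u else 0) := by
    intro v
    rw [Finset.sum_add_sum_compl, SimpleGraph.neighborFinset_eq_filter, Finset.sum_filter]
  rw [Finset.sum_congr rfl fun v _ => hnbr v, Finset.sum_add_distrib, sum_sum_adj_sub_eq_zero G,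
    add_zero, Finset.sum_comm, cutPairs, Finset.sum_filter, Finset.sum_product]
  refine Finset.sum_congr rfl fun u _ => Finset.sum_congr rfl fun v _ => ?_
  rw [G.adj_comm]

lemma sum_cutPairs_density_sub_le (hd : ∀ v, 0 < G.degree v) (S : Finset V) {p c : V → ℝ}
    (hc : 0 ≤ c) (hp : ∀ v, p v - ∑ u ∈ G.neighborFinset v, p u / G.degree u ≤ c v) :
    ∑ x ∈ cutPairs G S, (p x.2 / G.degree x.2 - p x.1 / G.degree x.1) ≤ ∑ v, c v := by
  rw [sum_cutPairs_sub S fun v => p v / G.degree v]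
  calc _ ≤ ∑ v ∈ Sᶜ, c v := Finset.sum_le_sum fun v _ => ?_
    _ ≤ ∑ v, c v := Finset.sum_le_sum_of_subset_of_nonneg (Finset.subset_univ _)
        fun v _ _ => hc v
  have hdv : (G.degree v : ℝ) ≠ 0 := by exact_mod_cast (hd v).ne'
  rw [Finset.sum_sub_distrib, Finset.sum_const, SimpleGraph.card_neighborFinset_eq_degree,
    nsmul_eq_mul, mul_div_cancel₀ _ hdv]
  exact hp v

end Cut

section Sweep

variable {G : SimpleGraph V}

lemma Vlt_mono (p : V → ℝ) : Monotone (Vlt G p) := fun a b hab v hv => by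
  simp only [Vlt, Finset.mem_filter, Finset.mem_univ, true_and] at hv ⊢
  exact hv.trans_le hab

lemma vol_mono : Monotone (vol G) := fun _ _ h => Finset.sum_le_sum_of_subset h

lemma card_cutPairs_Vlt_le (p : V → ℝ) {t g c : ℝ} (hg : 0 < g)
    (hcut : ∑ x ∈ cutPairs G (Vlt G p t), (p x.2 / G.degree x.2 - p x.1 / G.degree x.1) ≤ c) :
    ((cutPairs G (Vlt G p t)).card : ℝ)
      ≤ c / g + ((vol G (Vlt G p (t + g)) : ℝ) - vol G (Vlt G p t)) := by
  set S := Vlt G p t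
  set T := Vlt G p (t + g)
  set gap : V × V → ℝ := fun x => p x.2 / G.degree x.2 - p x.1 / G.degree x.1
  have hmem : ∀ x ∈ cutPairs G S,
      p x.1 / G.degree x.1 < t ∧ t ≤ p x.2 / G.degree x.2 ∧ G.Adj x.1 x.2 := by
    intro x hx
    simp only [mem_cutPairs, S, Vlt, Finset.mem_filter, Finset.mem_univ, true_and, not_lt] at hx
    exact hx
  -- at most `c / g` boundary edges have a density jump `≥ g`; the others end in `T \ S`
  set big := (cutPairs G S).filter fun x => g ≤ gap x
  set small := (cutPairs G S).filter fun x => ¬ g ≤ gap x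
  have hbig : (big.card : ℝ) ≤ c / g := by
    rw [le_div_iff₀ hg, ← nsmul_eq_mul]
    calc big.card • g ≤ ∑ x ∈ big, gap x :=
          Finset.card_nsmul_le_sum _ _ _ fun x hx => (Finset.mem_filter.mp hx).2
      _ ≤ ∑ x ∈ cutPairs G S, gap x :=
          Finset.sum_le_sum_of_subset_of_nonneg (Finset.filter_subset _ _) fun x hx _ => by
            have := hmem x hx; simp only [gap]; linarith
      _ ≤ c := hcut
  have hsmall : small.card ≤ vol G (T \ S) := by
    refine card_le_vol_of_adj_snd_mem fun x hx => ?_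
    obtain ⟨hx, hgx⟩ := Finset.mem_filter.mp hx
    obtain ⟨h1, h2, hadj⟩ := hmem x hx
    simp only [gap, not_le] at hgx
    simp only [T, S, Vlt, Finset.mem_sdiff, Finset.mem_filter, Finset.mem_univ, true_and, not_lt]
    exact ⟨hadj, by linarith, h2⟩
  have hvol : vol G (T \ S) + vol G S = vol G T := Finset.sum_sdiff (Vlt_mono p (by linarith))
  have hsplit : big.card + small.card = (cutPairs G S).card :=
    Finset.card_filter_add_card_filter_not _
  have hsmall' : (small.card : ℝ) + vol G S ≤ vol G T := by
    exact_mod_cast hvol ▸ Nat.add_le_add_right hsmall _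
  have hsplit' : (big.card : ℝ) + small.card = (cutPairs G S).card := by exact_mod_cast hsplit
  linarith

lemma vol_Vlt_growth (p : V → ℝ) {t c φ : ℝ} (hc : 0 < c) (hφ : 0 < φ)
    (hvol : 0 < (vol G (Vlt G p t) : ℝ))
    (hcut : ∑ x ∈ cutPairs G (Vlt G p t), (p x.2 / G.degree x.2 - p x.1 / G.degree x.1) ≤ c)
    (hcond : φ * vol G (Vlt G p t) < (cutPairs G (Vlt G p t)).card) :
    (1 + φ / 2) * vol G (Vlt G p t) ≤ vol G (Vlt G p (t + 2 * c / φ / vol G (Vlt G p t))) := by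
  have h := card_cutPairs_Vlt_le p (g := 2 * c / φ / vol G (Vlt G p t)) (by positivity) hcut
  have hcg : c / (2 * c / φ / vol G (Vlt G p t)) = φ * vol G (Vlt G p t) / 2 := by
    field_simp
  linarith

end Sweep

lemma exists_pow_mul_le_of_growth (f : ℝ → ℝ) {τ a β : ℝ} (ha : 0 < a) (hβ : 1 < β)
    (hfτ : 0 < f τ)
    (hstep : ∀ t, τ ≤ t → t < τ + a * β / ((β - 1) * f τ) → 0 < f t →
      β * f t ≤ f (t + a / f t))
    (k : ℕ) : ∃ t, τ ≤ t ∧ t < τ + a * β / ((β - 1) * f τ) ∧ f τ * β ^ k ≤ f t := by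
  set K := a * β / ((β - 1) * f τ)
  have hβ1 : 0 < β - 1 := sub_pos.mpr hβ
  have hK : 0 < K := by positivity
  have hK_pow : ∀ k : ℕ, 0 < K / β ^ k := fun k => by positivity
  suffices ∀ k : ℕ, ∃ t, τ ≤ t ∧ t + K / β ^ k ≤ τ + K ∧ f τ * β ^ k ≤ f t by
    obtain ⟨t, hτt, htK, hft⟩ := this k
    exact ⟨t, hτt, by linarith [hK_pow k], hft⟩
  intro k
  induction k with
  | zero => exact ⟨τ, le_rfl, by simp, by simp⟩
  | succ k ih =>
    obtain ⟨t, hτt, htK, hft⟩ := ih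
    have hft0 : 0 < f t := lt_of_lt_of_le (by positivity) hft
    -- the time steps `a / f t` are dominated by the terms of the geometric series summing to `K`
    have hstep_le : a / f t ≤ K / β ^ k - K / β ^ (k + 1) := by
      calc a / f t ≤ a / (f τ * β ^ k) := div_le_div_of_nonneg_left ha.le (by positivity) hft
        _ = K / β ^ k - K / β ^ (k + 1) := by
          simp only [K]
          field_simp
          ring
    refine ⟨t + a / f t, by linarith [div_pos ha hft0], by linarith, ?_⟩
    calc f τ * β ^ (k + 1) = β * (f τ * β ^ k) := by ring
      _ ≤ β * f t := by gcongr
      _ ≤ f (t + a / f t) := hstep t hτt (by linarith [hK_pow k]) hft0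

lemma growth_time_le {c T F φ : ℝ} (hc : 0 < c) (hT : 0 < T) (hF : 0 < F) (hφ0 : 0 < φ)
    (hφ5 : φ ≤ 5) (hφsq : φ ^ 2 = 14 * c / (T * F)) :
    2 * c / φ * (1 + φ / 2) / ((1 + φ / 2 - 1) * F) ≤ T := by
  have hφne : φ ≠ 0 := hφ0.ne'
  have h : 2 * c / φ * (1 + φ / 2) / ((1 + φ / 2 - 1) * F)
      = (2 + φ) * (2 * c) / (φ ^ 2 * F) := by
    rw [add_sub_cancel_left]
    field_simp
  rw [h, hφsq, div_le_iff₀ (by positivity)]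
  field_simp
  nlinarith

theorem exists_conduct_Vlt_le {G : SimpleGraph V} (p : V → ℝ) {c τ t0 : ℝ} (hc : 0 < c)
    (hcut : ∀ t, ∑ x ∈ cutPairs G (Vlt G p t),
      (p x.2 / G.degree x.2 - p x.1 / G.degree x.1) ≤ c)
    (hτt : τ < t0) (hvol : vol G (Vlt G p t0) ≤ G.edgeFinset.card)
    (hτ : 0 < vol G (Vlt G p τ)) :
    ∃ t, τ ≤ t ∧ t < t0 ∧
      conduct G (Vlt G p t) ≤ √(14 * c / ((t0 - τ) * vol G (Vlt G p τ))) := by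
  set f : ℝ → ℝ := fun t => vol G (Vlt G p t)
  have hf_mono : Monotone f := fun a b hab => by
    simp only [f, Nat.cast_le]; exact vol_mono (Vlt_mono p hab)
  have hfτ : 0 < f τ := by simp only [f]; exact_mod_cast hτ
  set φ := √(14 * c / ((t0 - τ) * f τ))
  have hφ0 : 0 < φ := Real.sqrt_pos.mpr (by have := sub_pos.mpr hτt; positivity)
  by_contra! hφ
  have hcond : ∀ t, τ ≤ t → t < t0 → φ * f t < (cutPairs G (Vlt G p t)).card := by
    intro t hτt' ht0
    have hft : 0 < f t := hfτ.trans_le (hf_mono hτt')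
    have h := hφ t hτt' ht0
    rw [conduct_eq_of_vol_le ((vol_mono (Vlt_mono p ht0.le)).trans hvol), lt_div_iff₀ hft] at h
    exact h
  have hφ1 : φ < 1 := by
    have h := hcond τ le_rfl hτt
    have : ((cutPairs G (Vlt G p τ)).card : ℝ) ≤ f τ := by
      simp only [f]; exact_mod_cast card_cutPairs_le_vol (G := G) (Vlt G p τ)
    nlinarith
  have hφsq : φ ^ 2 = 14 * c / ((t0 - τ) * f τ) :=
    Real.sq_sqrt (by have := sub_pos.mpr hτt; positivity)
  have hK := growth_time_le hc (sub_pos.mpr hτt) hfτ hφ0 (by linarith) hφsq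
  obtain ⟨k, hk⟩ := pow_unbounded_of_one_lt ((G.edgeFinset.card : ℝ) / f τ)
    (by linarith : 1 < 1 + φ / 2)
  obtain ⟨t, hτt', htK, hft⟩ := exists_pow_mul_le_of_growth f (a := 2 * c / φ) (by positivity)
    (by linarith) hfτ (fun t h1 h2 hpos => vol_Vlt_growth p hc hφ0 hpos (hcut t)
      (hcond t h1 (by linarith))) k
  have hft0 : f t ≤ G.edgeFinset.card := by
    simp only [f]; exact_mod_cast (vol_mono (Vlt_mono p (by linarith))).trans hvol
  rw [div_lt_iff₀ hfτ] at hk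
  linarith

theorem stmt12_general {V : Type*} [Fintype V] (G : SimpleGraph V)
    (m : ℕ) (hm : m = G.edgeFinset.card)
    (hd : ∀ v : V, 0 < G.degree v)
    (α : ℝ) (hα0 : 0 < α) (hα : α ≤ 1 / 3)
    (p0 : V → ℝ) (hp0 : ∀ v, 0 ≤ p0 v) (hsum : ∑ v, p0 v = 1)
    (us : List V)
    (p : V → ℝ) (hp : p = (runState G α ((fun _ => 0), p0) us).1)
    (τ t0 : ℝ) (hτt : τ < t0)
    (hvol : vol G (Vlt G p t0) ≤ m)
    (hne : (Vlt G p τ).Nonempty) :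
    ∃ t : ℝ, τ ≤ t ∧ t < t0 ∧
      conduct G (Vlt G p t) ≤
        Real.sqrt (42 * α / ((t0 - τ) * (vol G (Vlt G p τ) : ℝ))) := by
  subst hm
  have hcut : ∀ t, ∑ x ∈ cutPairs G (Vlt G p t),
      (p x.2 / G.degree x.2 - p x.1 / G.degree x.1) ≤ 3 * α := fun t => by
    simpa [← Finset.mul_sum, hsum] using sum_cutPairs_density_sub_le hd (Vlt G p t)
      (c := fun v => 3 * α * p0 v) (fun v => by have := hp0 v; positivity)
      (runState_fst_sub_sum_le hα0.le hα hp0 hp)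
  have hτ : 0 < vol G (Vlt G p τ) := Finset.sum_pos (fun v _ => hd v) hne
  have h := exists_conduct_Vlt_le p (by positivity) hcut hτt hvol hτ
  rwa [← mul_assoc, show (14 : ℝ) * 3 = 42 by norm_num] at h

theorem stmt12 {V : Type*} [Fintype V] (G : SimpleGraph V)
    (m : ℕ) (hm : m = G.edgeFinset.card) (hm1 : 1 ≤ m)
    (hd : ∀ v : V, 0 < G.degree v)
    (α : ℝ) (hα0 : 0 < α) (hα : α ≤ 1 / 3)
    (p0 : V → ℝ) (hp0 : ∀ v, 0 ≤ p0 v) (hsum : ∑ v, p0 v = 1)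
    (us : List V)
    (p : V → ℝ) (hp : p = (runState G α ((fun _ => 0), p0) us).1)
    (τ t0 : ℝ) (hτ0 : 0 ≤ τ) (hτt : τ < t0)
    (hvol : vol G (Vlt G p t0) ≤ m)
    (hne : (Vlt G p τ).Nonempty) :
    ∃ t : ℝ, τ ≤ t ∧ t < t0 ∧
      conduct G (Vlt G p t) ≤
        Real.sqrt (42 * α / ((t0 - τ) * (vol G (Vlt G p τ) : ℝ))) :=
  stmt12_general G m hm hd α hα0 hα p0 hp0 hsum us p hp τ t0 hτt hvol hne

end
end

section
/- Let V be a finite set and w : V × V → ℕ a symmetric function with w(v,v) = 0 for all v (a multigraph given by edge multiplicities), and set d(v) = ∑_{u∈V} w(v,u). Let C ⊆ V, and for v ∈ C let leave(v) = ∑_{u∉C} w(v,u) and k = ∑_{v∈C} leave(v) (the number of edges leaving C, with multiplicity). Let L = {v ∈ C : 2·leave(v) ≥ d(v) − 2}, and suppose every v ∈ L has d(v) ≥ 100. Then k plus the number of edges with both endpoints in C and at least one endpoint in L (with multiplicity, each such edge counted once) is at most (100/49)·k. -/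
/-!
Each vertex `v ∈ L` has `d v ≥ 100` and `d v ≤ 2·leave v + 2`, so `leave v ≥ 49`; its degree
inside `C` is `d v - leave v ≤ leave v + 2 ≤ (51/49)·leave v`. An edge inside `C` meeting `L` is
counted at least once by the inside-degrees of the vertices of `L`, so there are at most
`(51/49)·k` such edges, and `k + (51/49)·k = (100/49)·k`.
-/

open scoped Classical
open Finset

theorem sum_sum_ite_or_le_two_nsmul {ι R : Type*} [AddCommMonoid R] [PartialOrder R]
    [IsOrderedAddMonoid R] (s L : Finset ι) (hL : L ⊆ s) (f : ι → ι → R)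
    (hf : ∀ a b, 0 ≤ f a b) (hsymm : ∀ a b, f a b = f b a) :
    (∑ a ∈ s, ∑ b ∈ s, if a ∈ L ∨ b ∈ L then f a b else 0) ≤
      2 • ∑ a ∈ L, ∑ b ∈ s, f a b := by
  have hrow : (∑ a ∈ s, ∑ b ∈ s, if a ∈ L then f a b else 0) = ∑ a ∈ L, ∑ b ∈ s, f a b := by
    simp only [← ite_sum_zero, sum_ite_mem, inter_eq_right.mpr hL]
  have hcol : (∑ a ∈ s, ∑ b ∈ s, if b ∈ L then f a b else 0) = ∑ a ∈ L, ∑ b ∈ s, f a b := by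
    rw [sum_comm, ← hrow]
    simp only [hsymm]
  calc (∑ a ∈ s, ∑ b ∈ s, if a ∈ L ∨ b ∈ L then f a b else 0)
      ≤ ∑ a ∈ s, ∑ b ∈ s, ((if a ∈ L then f a b else 0) + if b ∈ L then f a b else 0) := by
        gcongr with a _ b _
        by_cases ha : a ∈ L <;> by_cases hb : b ∈ L <;>
          simp [ha, hb, le_add_of_nonneg_left (hf a b)]
    _ = (∑ a ∈ s, ∑ b ∈ s, if a ∈ L then f a b else 0) +
          ∑ a ∈ s, ∑ b ∈ s, if b ∈ L then f a b else 0 := by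
        simp only [sum_add_distrib]
    _ = 2 • ∑ a ∈ L, ∑ b ∈ s, f a b := by rw [hrow, hcol, two_nsmul]

theorem stmt19_general {V : Type*} [Fintype V] (w : V × V → ℕ)
    (hsymm : ∀ u v : V, w (u, v) = w (v, u))
    (C : Finset V)
    (d : V → ℕ) (hd : ∀ v : V, d v = ∑ u : V, w (v, u))
    (leave : V → ℕ) (hleave : ∀ v : V, leave v = ∑ u ∈ Cᶜ, w (v, u))
    (k : ℕ) (hk : k = ∑ v ∈ C, leave v)
    (L : Finset V) (hL : L = C.filter fun v => d v ≤ 2 * leave v + 2)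
    (hdL : ∀ v ∈ L, 100 ≤ d v) :
    (k : ℝ) +
        (∑ a ∈ C, ∑ b ∈ C, if a ∈ L ∨ b ∈ L then (w (a, b) : ℝ) else 0) / 2 ≤
      100 / 49 * (k : ℝ) := by
  have hLC : L ⊆ C := hL ▸ filter_subset _ _
  have hinside : ∀ v ∈ L, 49 * ∑ u ∈ C, w (v, u) ≤ 51 * leave v := by
    intro v hv
    have hbig := hdL v hv
    rw [hL, mem_filter] at hv
    have hsplit : d v = ∑ u ∈ C, w (v, u) + leave v := by
      rw [hd, hleave, sum_add_sum_compl]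
    omega
  have hcount : 49 * ∑ v ∈ L, ∑ u ∈ C, w (v, u) ≤ 51 * k := by
    rw [hk, mul_sum, mul_sum]
    exact (sum_le_sum hinside).trans (sum_le_sum_of_subset hLC)
  have hedges := sum_sum_ite_or_le_two_nsmul C L hLC (fun a b => (w (a, b) : ℝ))
    (fun _ _ => Nat.cast_nonneg _) (fun a b => by rw [hsymm])
  have hcount' : 49 * ∑ v ∈ L, ∑ u ∈ C, (w (v, u) : ℝ) ≤ 51 * k := by exact_mod_cast hcount
  rw [two_nsmul] at hedges
  linarith

theorem stmt19 {V : Type*} [Fintype V] (w : V × V → ℕ)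
    (hsymm : ∀ u v : V, w (u, v) = w (v, u))
    (hdiag : ∀ v : V, w (v, v) = 0)
    (C : Finset V)
    (d : V → ℕ) (hd : ∀ v : V, d v = ∑ u : V, w (v, u))
    (leave : V → ℕ) (hleave : ∀ v : V, leave v = ∑ u ∈ Cᶜ, w (v, u))
    (k : ℕ) (hk : k = ∑ v ∈ C, leave v)
    (L : Finset V) (hL : L = C.filter fun v => d v ≤ 2 * leave v + 2)
    (hdL : ∀ v ∈ L, 100 ≤ d v) :
    (k : ℝ) +
        (∑ a ∈ C, ∑ b ∈ C, if a ∈ L ∨ b ∈ L then (w (a, b) : ℝ) else 0) / 2 ≤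
      100 / 49 * (k : ℝ) :=
  stmt19_general w hsymm C d hd leave hleave k hk L hL hdL
end
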